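/- arXiv:2504.09840 — 2 statements merged into one kernel-verified Lean document; each statement's English description precedes it below -/
import Mathlib

section
/- Let n ≥ 1 and 0 < s < 1. There exists a constant C = C(n,s) such that for every measurable set A ⊂ ℝⁿ of finite Lebesgue measure, the fractional torsion energy satisfies |E(A)| ≤ C |A|^{(n+2s)/n}, i.e. 0 ≥ E(A) ≥ −C |A|^{(n+2s)/n}. -/
open MeasureTheory Metric Set

noncomputable section

/-- `ℝⁿ` as a Euclidean space. -/
abbrev Eucl (n : ℕ) := EuclideanSpace ℝ (Fin n)

/-- The integrand of the squared Gagliardo seminorm `[u]²`. -/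
def gagIntegrand (n : ℕ) (s : ℝ) (u : Eucl n → ℝ) : Eucl n × Eucl n → ℝ :=
  fun p => (u p.1 - u p.2) ^ 2 / dist p.1 p.2 ^ ((n : ℝ) + 2 * s)

/-- The squared Gagliardo seminorm `[u]²`. -/
def gagliardoSq (n : ℕ) (s : ℝ) (u : Eucl n → ℝ) : ℝ :=
  ∫ p : Eucl n × Eucl n, gagIntegrand n s u p

/-- The fractional torsion energy of a measurable set `D ⊆ ℝⁿ`:
`E(D) = inf { (1/2)[u]² − ∫ u : u ∈ W̃^{s,2}(ℝⁿ) ∩ L¹(ℝⁿ), u = 0 a.e. on ℝⁿ ∖ D }`. -/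
def torsionEnergy (n : ℕ) (s : ℝ) (D : Set (Eucl n)) : ℝ :=
  sInf { e : ℝ | ∃ u : Eucl n → ℝ,
    MemLp u 2 (volume : Measure (Eucl n)) ∧
    Integrable u (volume : Measure (Eucl n)) ∧
    Integrable (gagIntegrand n s u) (volume : Measure (Eucl n × Eucl n)) ∧
    (∀ᵐ x ∂(volume : Measure (Eucl n)), x ∉ D → u x = 0) ∧
    e = (1 / 2) * gagliardoSq n s u - ∫ x, u x }

/-!
A competitor `u` vanishes off `A`, so for `x ∈ A` the Gagliardo kernel sees the part of the
ball `B_r(x)` outside `A`, of measure at least `|B_r| - |A|`; this gives the Poincaré-type bound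
`κ ∫ u² ≤ [u]²` with `κ = (|B_r| - |A|) / r^{n+2s}`. Young's inequality on `A` then gives
`∫ u ≤ (κ/2) ∫ u² + |A| / (2κ)`, hence `E(A) ≥ -|A| / (2κ)`. Choosing `|B_r| = 2|A|` makes
this `-r^{n+2s}/2`, which scales like `|A|^{(n+2s)/n}`.
-/

lemma gagIntegrand_nonneg (n : ℕ) (s : ℝ) (u : Eucl n → ℝ) (p : Eucl n × Eucl n) :
    0 ≤ gagIntegrand n s u p :=
  div_nonneg (sq_nonneg _) (Real.rpow_nonneg dist_nonneg _)

lemma exists_competitor_energy_eq_zero (n : ℕ) (s : ℝ) (D : Set (Eucl n)) :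
    ∃ u : Eucl n → ℝ, MemLp u 2 volume ∧ Integrable u volume ∧
      Integrable (gagIntegrand n s u) volume ∧ (∀ᵐ x ∂volume, x ∉ D → u x = 0) ∧
      (0 : ℝ) = 1 / 2 * gagliardoSq n s u - ∫ x, u x := by
  have hzero : gagIntegrand n s 0 = 0 := by ext; simp [gagIntegrand]
  refine ⟨0, MemLp.zero, integrable_zero _ _ _, hzero ▸ integrable_zero _ _ _,
    ae_of_all _ fun _ _ => rfl, ?_⟩
  simp [gagliardoSq, hzero]

lemma torsionEnergy_nonpos (n : ℕ) (s : ℝ) (D : Set (Eucl n)) : torsionEnergy n s D ≤ 0 :=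
  Real.sInf_nonpos' ⟨0, exists_competitor_energy_eq_zero n s D, le_rfl⟩

lemma le_torsionEnergy {n : ℕ} {s b : ℝ} {D : Set (Eucl n)}
    (h : ∀ u : Eucl n → ℝ, MemLp u 2 volume → Integrable u volume →
      Integrable (gagIntegrand n s u) volume → (∀ᵐ x ∂volume, x ∉ D → u x = 0) →
      b ≤ 1 / 2 * gagliardoSq n s u - ∫ x, u x) :
    b ≤ torsionEnergy n s D :=
  le_csInf ⟨0, exists_competitor_energy_eq_zero n s D⟩
    fun _ ⟨u, hu2, hu1, hG, h0, he⟩ => he ▸ h u hu2 hu1 hG h0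

lemma integral_le_half_mul_integral_sq_add {α : Type*} [MeasurableSpace α] {μ : Measure α}
    {A : Set α} {u : α → ℝ} {κ : ℝ} (hκ : 0 < κ) (hA : MeasurableSet A) (hAfin : μ A ≠ ⊤)
    (hu : Integrable u μ) (hu2 : Integrable (fun x => u x ^ 2) μ)
    (h0 : ∀ᵐ x ∂μ, x ∉ A → u x = 0) :
    ∫ x, u x ∂μ ≤ κ / 2 * ∫ x, u x ^ 2 ∂μ + μ.real A / (2 * κ) := by
  have hpt : ∀ᵐ x ∂μ, u x ≤ κ / 2 * u x ^ 2 + A.indicator (fun _ => 1 / (2 * κ)) x := by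
    filter_upwards [h0] with x hx
    by_cases hxA : x ∈ A
    · have hsq : κ / 2 * u x ^ 2 + 1 / (2 * κ) - u x = (κ * u x - 1) ^ 2 / (2 * κ) := by
        field_simp; ring
      rw [indicator_of_mem hxA]
      linarith [div_nonneg (sq_nonneg (κ * u x - 1)) (by positivity : (0 : ℝ) ≤ 2 * κ)]
    · rw [hx hxA, indicator_of_notMem hxA]
      positivity
  have hind : Integrable (A.indicator fun _ => 1 / (2 * κ)) μ :=
    (integrable_indicator_iff hA).2 (integrableOn_const hAfin)
  calc ∫ x, u x ∂μ ≤ ∫ x, (κ / 2 * u x ^ 2 + A.indicator (fun _ => 1 / (2 * κ)) x) ∂μ :=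
        integral_mono_ae hu ((hu2.const_mul _).add hind) hpt
    _ = κ / 2 * ∫ x, u x ^ 2 ∂μ + μ.real A / (2 * κ) := by
        rw [integral_add (hu2.const_mul _) hind, integral_const_mul,
          integral_indicator_const _ hA, smul_eq_mul, mul_one_div]

lemma mul_integral_sq_le_gagliardoSq {n : ℕ} {s r : ℝ} {A : Set (Eucl n)} {u : Eucl n → ℝ}
    (hs : 0 ≤ s) (hr : 0 < r) (hA : MeasurableSet A) (hAfin : volume A ≠ ⊤)
    (hu : MemLp u 2 volume) (hG : Integrable (gagIntegrand n s u) volume)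
    (h0 : ∀ᵐ x ∂volume, x ∉ A → u x = 0) :
    (volume.real (ball (0 : Eucl n) r) - volume.real A) / r ^ ((n : ℝ) + 2 * s) *
      ∫ x, u x ^ 2 ≤ gagliardoSq n s u := by
  set q : ℝ := n + 2 * s
  let G : Eucl n × Eucl n → ℝ := fun p =>
    (ball p.1 r \ A).indicator (fun _ => u p.1 ^ 2 / r ^ q) p.2
  have hq : 0 ≤ q := by positivity
  have hS : MeasurableSet {p : Eucl n × Eucl n | p.2 ∈ ball p.1 r \ A} :=
    (measurableSet_lt (by fun_prop) measurable_const).inter (measurable_snd hA.compl)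
  have hG_le : G ≤ᵐ[volume] gagIntegrand n s u := by
    filter_upwards [Measure.quasiMeasurePreserving_snd.ae h0] with ⟨x, y⟩ hy
    by_cases hxy : y ∈ ball x r \ A
    · have huy : u y = 0 := hy hxy.2
      rw [show G (x, y) = u x ^ 2 / r ^ q from indicator_of_mem hxy _, gagIntegrand, huy, sub_zero]
      rcases eq_or_ne x y with rfl | hne
      · simp [huy]
      · have hd : 0 < dist x y := dist_pos.2 hne
        have hdr : dist x y ≤ r := (dist_comm x y ▸ mem_ball.1 hxy.1).le
        exact div_le_div_of_nonneg_left (sq_nonneg _) (Real.rpow_pos_of_pos hd q)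
          (Real.rpow_le_rpow hd.le hdr hq)
    · rw [show G (x, y) = 0 from indicator_of_notMem hxy _]
      exact gagIntegrand_nonneg n s u _
  have hG_int : Integrable G volume := by
    refine hG.mono' ?_ (hG_le.mono fun p hp => ?_)
    · have hG_eq : G = {p | p.2 ∈ ball p.1 r \ A}.indicator fun p => u p.1 ^ 2 / r ^ q := rfl
      rw [hG_eq]
      exact ((((hu.aestronglyMeasurable.comp_quasiMeasurePreserving
        Measure.quasiMeasurePreserving_fst).aemeasurable.pow_const 2).div_const _).indicator
        hS).aestronglyMeasurable
    · rwa [Real.norm_eq_abs, abs_of_nonneg (indicator_nonneg (fun _ _ => by positivity) _)]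
  calc (volume.real (ball (0 : Eucl n) r) - volume.real A) / r ^ q * ∫ x, u x ^ 2
      = ∫ x, (volume.real (ball (0 : Eucl n) r) - volume.real A) / r ^ q * u x ^ 2 :=
        (integral_const_mul _ _).symm
    _ ≤ ∫ x, ∫ y, G (x, y) := by
        refine integral_mono (hu.integrable_sq.const_mul _) hG_int.integral_prod_left fun x => ?_
        have hinner : ∫ y, G (x, y) = volume.real (ball x r \ A) * (u x ^ 2 / r ^ q) :=
          integral_indicator_const (u x ^ 2 / r ^ q) (measurableSet_ball.diff hA)
        rw [hinner, ← Measure.addHaar_real_ball_center volume x r, div_mul_comm,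
          mul_comm (volume.real _)]
        exact mul_le_mul_of_nonneg_left (le_measureReal_sdiff hAfin) (by positivity)
    _ = ∫ p, G p := (integral_prod G hG_int).symm
    _ ≤ gagliardoSq n s u := integral_mono_ae hG_int hG hG_le

lemma neg_le_torsionEnergy {n : ℕ} {s r : ℝ} {A : Set (Eucl n)} (hs : 0 ≤ s) (hr : 0 < r)
    (hA : MeasurableSet A) (hAfin : volume A ≠ ⊤)
    (hAr : volume.real A < volume.real (ball (0 : Eucl n) r)) :
    -(volume.real A * r ^ ((n : ℝ) + 2 * s) /
      (2 * (volume.real (ball (0 : Eucl n) r) - volume.real A))) ≤ torsionEnergy n s A := by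
  refine le_torsionEnergy fun u hu2 hu1 hG h0 => ?_
  set κ := (volume.real (ball (0 : Eucl n) r) - volume.real A) / r ^ ((n : ℝ) + 2 * s)
  have hκ : 0 < κ := div_pos (sub_pos.2 hAr) (Real.rpow_pos_of_pos hr _)
  have hPoincare := mul_integral_sq_le_gagliardoSq hs hr hA hAfin hu2 hG h0
  have hYoung := integral_le_half_mul_integral_sq_add hκ hA hAfin hu1 hu2.integrable_sq h0
  have hκ_inv : volume.real A / (2 * κ) = volume.real A * r ^ ((n : ℝ) + 2 * s) /
      (2 * (volume.real (ball (0 : Eucl n) r) - volume.real A)) := by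
    simp only [κ]
    field_simp
  linarith

lemma measureReal_ball_eq_pow_mul {n : ℕ} {r : ℝ} (hr : 0 < r) :
    volume.real (ball (0 : Eucl n) r) = r ^ n * volume.real (ball (0 : Eucl n) 1) := by
  rw [measureReal_def, Measure.addHaar_ball_of_pos _ _ hr, finrank_euclideanSpace_fin,
    ENNReal.toReal_mul, ENNReal.toReal_ofReal (by positivity), measureReal_def]

theorem torsion_energy_scaling_bound_general
    (n : ℕ) (hn : 1 ≤ n) (s : ℝ) (hs0 : 0 < s) :
    ∃ C : ℝ, 0 < C ∧
      ∀ A : Set (Eucl n), MeasurableSet A → volume A < ⊤ →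
        torsionEnergy n s A ≤ 0 ∧
        -(C * (volume A).toReal ^ (((n : ℝ) + 2 * s) / n)) ≤ torsionEnergy n s A := by
  set q : ℝ := n + 2 * s
  set ω := volume.real (ball (0 : Eucl n) 1)
  have hω : 0 < ω := ENNReal.toReal_pos (measure_ball_pos _ _ one_pos).ne' measure_ball_lt_top.ne
  refine ⟨(2 / ω) ^ (q / n) / 2, by positivity, fun A hA hAfin => ⟨torsionEnergy_nonpos n s A, ?_⟩⟩
  rw [← measureReal_def]
  rcases measureReal_nonneg.eq_or_lt with hm | hm
  · rw [← hm, Real.zero_rpow (by positivity), mul_zero]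
    simpa [← hm] using neg_le_torsionEnergy hs0.le one_pos hA hAfin.ne (hm ▸ hω)
  · set r := (2 * volume.real A / ω) ^ (n : ℝ)⁻¹
    have hr : 0 < r := by positivity
    have hball : volume.real (ball (0 : Eucl n) r) = 2 * volume.real A := by
      rw [measureReal_ball_eq_pow_mul hr, Real.rpow_inv_natCast_pow (by positivity) (by omega)]
      exact div_mul_cancel₀ _ hω.ne'
    have hbound := neg_le_torsionEnergy hs0.le hr hA hAfin.ne (by linarith)
    convert hbound using 2
    rw [hball, ← Real.rpow_mul (by positivity), inv_mul_eq_div, mul_div_right_comm (2 : ℝ),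
      Real.mul_rpow (by positivity) hm.le]
    field_simp
    ring

/-- **Scaling bound on the torsion energy**: there is `C = C(n,s)` with
`0 ≥ E(A) ≥ −C|A|^{(n+2s)/n}` for every measurable `A ⊆ ℝⁿ` of finite measure. -/
theorem torsion_energy_scaling_bound
    (n : ℕ) (hn : 1 ≤ n) (s : ℝ) (hs0 : 0 < s) (hs1 : s < 1) :
    ∃ C : ℝ, 0 < C ∧
      ∀ A : Set (Eucl n), MeasurableSet A → volume A < ⊤ →
        torsionEnergy n s A ≤ 0 ∧
        -(C * (volume A).toReal ^ (((n : ℝ) + 2 * s) / n)) ≤ torsionEnergy n s A :=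
  torsion_energy_scaling_bound_general n hn s hs0
end
end

section
/- (Density of the support from non-degeneracy and Hölder continuity.) Let n ≥ 1, 0 < s < 1, c > 0 and L > 0. There is a constant C = C(n, s, c, L) > 0 with the following property: if r > 0, x₀ ∈ ℝⁿ, and u : ℝⁿ → ℝ is continuous with |u(x) − u(y)| ≤ L|x−y|^s for all x, y ∈ B_r(x₀), and sup_{B_{r/2}(x₀)} |u| ≥ c r^s, then |{x ∈ B_r(x₀) : u(x) ≠ 0}| ≥ C rⁿ, where |·| denotes Lebesgue measure. -/
/-!
Pick `x₁ ∈ B_{r/2}(x₀)` with `|u x₁| > c rˢ / 2`. Choosing `m ≤ 1/2` with `L mˢ ≤ c / 2`, the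
Hölder bound keeps `u` away from zero on `B_{mr}(x₁) ⊆ B_r(x₀)`, whose measure is `|B_1| (mr)ⁿ`.
-/

open MeasureTheory Metric Set

noncomputable section

lemma exists_pos_le_half_mul_rpow_le {s L ε : ℝ} (hs : 0 < s) (hL : 0 < L) (hε : 0 < ε) :
    ∃ m : ℝ, 0 < m ∧ m ≤ 1 / 2 ∧ L * m ^ s ≤ ε := by
  refine ⟨min ((ε / L) ^ s⁻¹) (1 / 2), lt_min (by positivity) (by norm_num), min_le_right _ _, ?_⟩
  calc L * min ((ε / L) ^ s⁻¹) (1 / 2) ^ s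
      ≤ L * ((ε / L) ^ s⁻¹) ^ s := by gcongr; exact min_le_left _ _
    _ = ε := by rw [Real.rpow_inv_rpow (by positivity) hs.ne']; field_simp

lemma exists_mem_lt_of_lt_biSup {α : Type*} {S : Set α} {f : α → ℝ} {b : ℝ} (hb : 0 ≤ b)
    (h : b < ⨆ x ∈ S, f x) : ∃ x ∈ S, b < f x := by
  by_contra! hle
  exact h.not_ge <| Real.iSup_le (fun x => Real.iSup_le (hle x) hb) hb

lemma ne_zero_of_holderOn {X : Type*} [PseudoMetricSpace X] {u : X → ℝ} {S : Set X}
    {L s ρ : ℝ} {x₁ x : X} (hL : 0 ≤ L) (hs : 0 ≤ s)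
    (hu : ∀ x ∈ S, ∀ y ∈ S, |u x - u y| ≤ L * dist x y ^ s)
    (hx₁ : x₁ ∈ S) (hρ : L * ρ ^ s < |u x₁|) (hx : x ∈ S) (hxρ : dist x x₁ ≤ ρ) : u x ≠ 0 := by
  intro hux
  have hdiff := hu x hx x₁ hx₁
  rw [hux, zero_sub, abs_neg] at hdiff
  have : L * dist x x₁ ^ s ≤ L * ρ ^ s := by gcongr
  linarith

lemma MeasureTheory.Measure.addHaar_real_ball_of_pos {E : Type*} [NormedAddCommGroup E] [NormedSpace ℝ E]
    [MeasurableSpace E] [BorelSpace E] [FiniteDimensional ℝ E] (μ : Measure E)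
    [μ.IsAddHaarMeasure] (x : E) {ρ : ℝ} (hρ : 0 < ρ) :
    μ.real (ball x ρ) = ρ ^ Module.finrank ℝ E * μ.real (ball 0 1) := by
  rw [measureReal_def, Measure.addHaar_ball_of_pos μ x hρ, ENNReal.toReal_mul,
    ENNReal.toReal_ofReal (by positivity), measureReal_def]

theorem support_density_general
    (n : ℕ) (s : ℝ) (hs0 : 0 < s)
    (c L : ℝ) (hc : 0 < c) (hL : 0 < L) :
    ∃ C : ℝ, 0 < C ∧
      ∀ (r : ℝ), 0 < r → ∀ (x₀ : Eucl n) (u : Eucl n → ℝ),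
        Continuous u →
        (∀ x ∈ Metric.ball x₀ r, ∀ y ∈ Metric.ball x₀ r,
          |u x - u y| ≤ L * dist x y ^ s) →
        c * r ^ s ≤ (⨆ x ∈ Metric.ball x₀ (r / 2), |u x|) →
        C * r ^ (n : ℝ) ≤ (volume {x | x ∈ Metric.ball x₀ r ∧ u x ≠ 0}).toReal := by
  obtain ⟨m, hm0, hm_half, hLm⟩ := exists_pos_le_half_mul_rpow_le hs0 hL (half_pos hc)
  have hB1 : 0 < volume.real (ball (0 : Eucl n) 1) :=
    ENNReal.toReal_pos (measure_ball_pos volume _ one_pos).ne' measure_ball_lt_top.ne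
  refine ⟨volume.real (ball (0 : Eucl n) 1) * m ^ n, by positivity, ?_⟩
  intro r hr x₀ u _ hu hsup
  have hrs : 0 < r ^ s := Real.rpow_pos_of_pos hr s
  obtain ⟨x₁, hx₁, hux₁⟩ : ∃ x₁ ∈ ball x₀ (r / 2), c * r ^ s / 2 < |u x₁| :=
    exists_mem_lt_of_lt_biSup (by positivity) (by linarith [mul_pos hc hrs])
  have hball : ball x₁ (r * m) ⊆ ball x₀ r :=
    ball_subset_ball' (by rw [mem_ball] at hx₁; nlinarith)
  have hLρ : L * (r * m) ^ s < |u x₁| := by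
    rw [Real.mul_rpow hr.le hm0.le]
    nlinarith
  have hsub : ball x₁ (r * m) ⊆ {x | x ∈ ball x₀ r ∧ u x ≠ 0} := fun x hx =>
    ⟨hball hx, ne_zero_of_holderOn hL.le hs0.le hu (hball (mem_ball_self (by positivity))) hLρ
      (hball hx) (mem_ball.mp hx).le⟩
  calc volume.real (ball (0 : Eucl n) 1) * m ^ n * r ^ (n : ℝ)
      = volume.real (ball x₁ (r * m)) := by
        rw [Measure.addHaar_real_ball_of_pos volume x₁ (by positivity), finrank_euclideanSpace_fin,
          Real.rpow_natCast, mul_pow]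
        ring
    _ ≤ volume.real {x | x ∈ ball x₀ r ∧ u x ≠ 0} :=
        measureReal_mono hsub (measure_ne_top_of_subset (fun _ hx => hx.1) measure_ball_lt_top.ne)

/-- **Density of the support from non-degeneracy and Hölder continuity.** There is
`C = C(n,s,c,L) > 0` such that whenever `u` is continuous, `s`-Hölder with constant `L`
on `B_r(x₀)`, and `sup_{B_{r/2}(x₀)} |u| ≥ c r^s`, then `|{u ≠ 0} ∩ B_r(x₀)| ≥ C rⁿ`. -/
theorem support_density
    (n : ℕ) (hn : 1 ≤ n) (s : ℝ) (hs0 : 0 < s) (hs1 : s < 1)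
    (c L : ℝ) (hc : 0 < c) (hL : 0 < L) :
    ∃ C : ℝ, 0 < C ∧
      ∀ (r : ℝ), 0 < r → ∀ (x₀ : Eucl n) (u : Eucl n → ℝ),
        Continuous u →
        (∀ x ∈ Metric.ball x₀ r, ∀ y ∈ Metric.ball x₀ r,
          |u x - u y| ≤ L * dist x y ^ s) →
        c * r ^ s ≤ (⨆ x ∈ Metric.ball x₀ (r / 2), |u x|) →
        C * r ^ (n : ℝ) ≤ (volume {x | x ∈ Metric.ball x₀ r ∧ u x ≠ 0}).toReal :=
  support_density_general n s hs0 c L hc hL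
end
end
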